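/- If a, b, and q are such that [T_q(Δ_{ab})] = [Δ_{ba}] with a, b rational (sides of the triangle rational), then q = (b²-1)/(a²+b²-2), q = (1-a²)/(b²+1-2a²), or q = (a²-b²)/(1+a²-2b²), and in particular q is rational whenever the relevant denominator is nonzero. -/

import Mathlib

open Complex Real

noncomputable def ρ : ℂ := Complex.exp (Real.pi * Complex.I / 3)

/-- The Nakamura–Oguiso moduli parameter of the triangle `△z01`. -/
noncomputable def φ (z : ℂ) : ℂ := ((z - ρ) / (z - ρ⁻¹)) ^ 3

/-- The complex number whose argument (times 6) gives the rotation angle of `T_q`. -/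
noncomputable def zq (q : ℝ) : ℂ := -1 + ((1 - 2 * q : ℝ) : ℂ) * (Real.sqrt 3 : ℂ) * Complex.I

/-!
With `u = zq q / ‖zq q‖`, the hypothesis `u ^ 6 * conj (φ z) = φ z` forces `zq q ^ 3 * conj (φ z)`
to be real. Up to the positive factor `‖z - ρ⁻¹‖ ^ 6` this number is the cube of
`ψ q z = zq q * conj (z - ρ) * (z - ρ⁻¹)`, whose real part and imaginary part divided by `√3` are
affine in `q` with coefficients in `‖z‖ ^ 2 = a ^ 2` and `‖z - 1‖ ^ 2 = b ^ 2`. A complex number has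
a real cube iff its argument is a multiple of `π / 3`, which gives three linear equations for `q`;
each degenerates only for the equilateral triangle `a = b = 1`.
-/

open ComplexConjugate

namespace Complex

theorem im_pow_mul_conj_eq_zero {v w : ℂ} (hv : v ≠ 0) (n : ℕ)
    (h : (v / (‖v‖ : ℂ)) ^ (2 * n) * conj w = w) : (v ^ n * conj w).im = 0 := by
  have hn : (‖v‖ : ℂ) ≠ 0 := by exact_mod_cast norm_ne_zero_iff.mpr hv
  rw [← conj_eq_iff_im]
  calc conj (v ^ n * conj w) = conj v ^ n * ((v / ‖v‖) ^ (2 * n) * conj w) := by simp [h]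
    _ = (conj v * v) ^ n / (‖v‖ ^ 2) ^ n * v ^ n * conj w := by ring
    _ = v ^ n * conj w := by rw [conj_mul']; field_simp

theorem conj_div_mul_normSq (x y : ℂ) : conj (x / y) * normSq y = conj x * y := by
  rcases eq_or_ne y 0 with rfl | hy
  · simp
  · rw [← mul_conj, map_div₀]
    have : conj y ≠ 0 := (map_ne_zero _).mpr hy
    field_simp

theorem im_add_sqrt_three_mul_I_pow_three_eq_zero {x y : ℝ}
    (h : ((x + √3 * y * I : ℂ) ^ 3).im = 0) : y = 0 ∨ y = x ∨ y = -x := by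
  have hs : √3 ^ 2 = 3 := Real.sq_sqrt (by norm_num)
  have h3 : ((x + √3 * y * I : ℂ) ^ 3).im = 3 * √3 * (y * ((x - y) * (x + y))) := by
    simp only [pow_succ, pow_zero, one_mul, mul_re, mul_im, add_re, add_im, ofReal_re, ofReal_im,
      I_re, I_im]
    linear_combination (-(√3 * y ^ 3)) * hs
  rw [h3] at h
  rcases mul_eq_zero.1 h with h | h
  · norm_num at h
  rcases mul_eq_zero.1 h with h | h
  · exact Or.inl h
  rcases mul_eq_zero.1 h with h | h
  · exact Or.inr (Or.inl (sub_eq_zero.1 h).symm)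
  · exact Or.inr (Or.inr (eq_neg_of_add_eq_zero_right h))

end Complex

theorem ρ_eq : ρ = ⟨1 / 2, √3 / 2⟩ := by
  rw [ρ, show (π : ℂ) * I / 3 = ((π / 3 : ℝ) : ℂ) * I by push_cast; ring, exp_mul_I,
    ← ofReal_cos, ← ofReal_sin, cos_pi_div_three, sin_pi_div_three]
  apply Complex.ext <;> simp

theorem ρ_inv_eq : ρ⁻¹ = ⟨1 / 2, -(√3 / 2)⟩ := by
  have hs : √3 ^ 2 = 3 := Real.sq_sqrt (by norm_num)
  refine inv_eq_of_mul_eq_one_right ?_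
  apply Complex.ext
  · simp only [ρ_eq, mul_re, one_re]
    linear_combination hs / 4
  · simp only [ρ_eq, mul_im, one_im]
    ring

theorem zq_ne_zero (q : ℝ) : zq q ≠ 0 := fun h => by simpa [zq] using congrArg re h

noncomputable def ψ (q : ℝ) (z : ℂ) : ℂ := zq q * conj (z - ρ) * (z - ρ⁻¹)

theorem ψ_pow_three (q : ℝ) (z : ℂ) :
    ψ q z ^ 3 = zq q ^ 3 * conj (φ z) * (normSq (z - ρ⁻¹) ^ 3 : ℝ) := by
  rw [ψ, mul_assoc, ← conj_div_mul_normSq, φ, map_pow]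
  push_cast; ring

theorem ψ_eq (q : ℝ) (z : ℂ) :
    ψ q z = ((-((‖z‖ ^ 2 + ‖z - 1‖ ^ 2 - 2) + 3 * (1 - 2 * q) * (‖z‖ ^ 2 - ‖z - 1‖ ^ 2)) / 2 : ℝ) : ℂ)
      + √3 * (((1 - 2 * q) * (‖z‖ ^ 2 + ‖z - 1‖ ^ 2 - 2) - (‖z‖ ^ 2 - ‖z - 1‖ ^ 2)) / 2 : ℝ) * I := by
  have hs : √3 ^ 2 = 3 := Real.sq_sqrt (by norm_num)
  simp only [Complex.sq_norm, normSq_apply]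
  rw [ψ, zq, ρ_inv_eq, ρ_eq]
  apply Complex.ext <;>
    simp only [mul_re, mul_im, add_re, add_im, sub_re, sub_im, neg_re, neg_im, conj_re, conj_im,
      ofReal_re, ofReal_im, I_re, I_im, one_re, one_im]
  · linear_combination (-(1 - 2 * q) * (z.re - 1 / 2) + 1 / 4) * hs
  · linear_combination (√3 * (2 * q - 1) / 4) * hs

theorem im_ψ_pow_three_eq_zero {q : ℝ} {z : ℂ}
    (hT : (zq q / (‖zq q‖ : ℝ)) ^ 6 * conj (φ z) = φ z) : (ψ q z ^ 3).im = 0 := by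
  rw [ψ_pow_three, im_mul_ofReal, im_pow_mul_conj_eq_zero (zq_ne_zero q) 3 hT, zero_mul]

theorem eq_div_of_one_sub_two_mul_eq {q D E : ℝ} (h : (1 - 2 * q) * D = D - 2 * E)
    (hDE : ¬(D = 0 ∧ E = 0)) : q = E / D := by
  have hD : D ≠ 0 := fun hD => hDE ⟨hD, by simp only [hD, mul_zero] at h; linarith⟩
  rw [eq_div_iff hD]
  linarith

theorem q_trichotomy {A B q X Y : ℝ} (hAB : ¬(A = 1 ∧ B = 1))
    (hX : 2 * X = -((A + B - 2) + 3 * (1 - 2 * q) * (A - B)))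
    (hY : 2 * Y = (1 - 2 * q) * (A + B - 2) - (A - B)) (h : Y = 0 ∨ Y = X ∨ Y = -X) :
    q = (B - 1) / (A + B - 2) ∨ q = (1 - A) / (B + 1 - 2 * A) ∨
      q = (A - B) / (1 + A - 2 * B) := by
  rcases h with h | h | h <;>
    [refine Or.inl ?_; refine Or.inr (Or.inl ?_); refine Or.inr (Or.inr ?_)] <;>
    exact eq_div_of_one_sub_two_mul_eq (by linarith) fun ⟨_, _⟩ => hAB ⟨by linarith, by linarith⟩

theorem q_trichotomy_of_rotation {q : ℝ} {z : ℂ} (hz : ¬(‖z‖ = 1 ∧ ‖z - 1‖ = 1))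
    (hT : (zq q / (‖zq q‖ : ℝ)) ^ 6 * conj (φ z) = φ z) :
    q = (‖z - 1‖ ^ 2 - 1) / (‖z‖ ^ 2 + ‖z - 1‖ ^ 2 - 2) ∨
      q = (1 - ‖z‖ ^ 2) / (‖z - 1‖ ^ 2 + 1 - 2 * ‖z‖ ^ 2) ∨
      q = (‖z‖ ^ 2 - ‖z - 1‖ ^ 2) / (1 + ‖z‖ ^ 2 - 2 * ‖z - 1‖ ^ 2) := by
  have h := im_ψ_pow_three_eq_zero hT
  rw [ψ_eq] at h
  refine q_trichotomy ?_ (by ring) (by ring) (im_add_sqrt_three_mul_I_pow_three_eq_zero h)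
  rwa [pow_eq_one_iff_of_nonneg (norm_nonneg z) two_ne_zero,
    pow_eq_one_iff_of_nonneg (norm_nonneg (z - 1)) two_ne_zero]

theorem stmt16_general (a b : ℚ) (hreg : ¬(a = 1 ∧ b = 1))
    (z : ℂ) (hza : ‖z‖ = (a : ℝ))
    (hzb : ‖z - 1‖ = (b : ℝ)) (q : ℝ)
    (hT : (zq q / (‖zq q‖ : ℝ)) ^ 6 * (starRingEnd ℂ) (φ z) = φ z) :
    (q = ((b : ℝ) ^ 2 - 1) / ((a : ℝ) ^ 2 + (b : ℝ) ^ 2 - 2) ∨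
     q = (1 - (a : ℝ) ^ 2) / ((b : ℝ) ^ 2 + 1 - 2 * (a : ℝ) ^ 2) ∨
     q = ((a : ℝ) ^ 2 - (b : ℝ) ^ 2) / (1 + (a : ℝ) ^ 2 - 2 * (b : ℝ) ^ 2)) ∧
    ∃ r : ℚ, q = (r : ℝ) := by
  have hq := q_trichotomy_of_rotation (by rw [hza, hzb]; exact_mod_cast hreg) hT
  rw [hza, hzb] at hq
  refine ⟨hq, ?_⟩
  rcases hq with hq | hq | hq
  · exact ⟨(b ^ 2 - 1) / (a ^ 2 + b ^ 2 - 2), by rw [hq]; push_cast; ring⟩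
  · exact ⟨(1 - a ^ 2) / (b ^ 2 + 1 - 2 * a ^ 2), by rw [hq]; push_cast; ring⟩
  · exact ⟨(a ^ 2 - b ^ 2) / (1 + a ^ 2 - 2 * b ^ 2), by rw [hq]; push_cast; ring⟩

/-- If `Δ_{ba}` has rational side lengths `1, b, a` (apex `z` with `|z| = a`, `|z-1| = b`),
is not equilateral, and the rotation `T_q` maps the moduli point of the mirror triangle
`Δ_{ab}` (the conjugate moduli point) to that of `Δ_{ba}`, then `q` is one of the three
stated rational expressions in `a, b`; in particular `q` is rational. -/
theorem stmt16 (a b : ℚ) (ha : 0 < a) (hb : 0 < b) (hreg : ¬(a = 1 ∧ b = 1))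
    (z : ℂ) (hzim : 0 < z.im) (hza : ‖z‖ = (a : ℝ))
    (hzb : ‖z - 1‖ = (b : ℝ)) (q : ℝ)
    (hT : (zq q / (‖zq q‖ : ℝ)) ^ 6 * (starRingEnd ℂ) (φ z) = φ z) :
    (q = ((b : ℝ) ^ 2 - 1) / ((a : ℝ) ^ 2 + (b : ℝ) ^ 2 - 2) ∨
     q = (1 - (a : ℝ) ^ 2) / ((b : ℝ) ^ 2 + 1 - 2 * (a : ℝ) ^ 2) ∨
     q = ((a : ℝ) ^ 2 - (b : ℝ) ^ 2) / (1 + (a : ℝ) ^ 2 - 2 * (b : ℝ) ^ 2)) ∧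
    ∃ r : ℚ, q = (r : ℝ) :=
  stmt16_general a b hreg z hza hzb q hT
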